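/- The function f(a) = 2^{1/4 + 2a} · a^a · (1 − 2a)^{1/2 − a} is strictly decreasing and continuous on (0, 1/16], with limit 2^{1/4} as a → 0⁺ and f(1/16) > 1. -/

import Mathlib

/-!
On `[0, 1/2]` the function is `exp ∘ logF` with
`logF a = (1/4 + 2a) log 2 + a log a + (1/2 - a) log (1 - 2a)`, which is continuous on all of `ℝ`
since `x log x` is. Its derivative `log (4a) - log (1 - 2a)` is negative for `0 < a < 1/6`, and
`16 logF (1/16) = 7 log 7 - 19 log 2 > 0` because `7^7 > 2^19`.
-/

open Real Filter Set Topology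

lemma Real.rpow_eq_exp_log_mul_of_nonneg {x y : ℝ} (hx : 0 ≤ x) (hy : x = 0 → y = 0) :
    x ^ y = exp (log x * y) := by
  rcases hx.eq_or_lt with rfl | hx
  · simp [hy rfl]
  · exact rpow_def_of_pos hx y

namespace Hilfssatz5

noncomputable def f (a : ℝ) : ℝ := 2 ^ (1 / 4 + 2 * a) * a ^ a * (1 - 2 * a) ^ (1 / 2 - a)

noncomputable def logF (a : ℝ) : ℝ :=
  (1 / 4 + 2 * a) * log 2 + a * log a + (1 / 2 - a) * log (1 - 2 * a)

lemma continuous_logF : Continuous logF := by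
  have h : logF = fun a ↦ (1 / 4 + 2 * a) * log 2 + a * log a
      + 1 / 2 * ((1 - 2 * a) * log (1 - 2 * a)) := by
    funext a; simp only [logF]; ring
  rw [h]
  exact ((by fun_prop : Continuous fun a : ℝ ↦ (1 / 4 + 2 * a) * log 2).add
    continuous_mul_log).add
    (continuous_const.mul (by fun_prop : Continuous fun a : ℝ ↦ 1 - 2 * a).mul_log)

-- `0 ^ 0 = 1` and `log 0 = 0` make this hold at both endpoints.
lemma eqOn_f_exp_logF : EqOn f (exp ∘ logF) (Icc 0 (1 / 2)) := by
  rintro a ⟨ha₀, ha₁⟩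
  rw [f, Function.comp_apply, logF, rpow_def_of_pos two_pos,
    rpow_eq_exp_log_mul_of_nonneg ha₀ id,
    rpow_eq_exp_log_mul_of_nonneg (by linarith) (fun h ↦ by linarith), exp_add, exp_add]
  ring_nf

lemma hasDerivAt_logF {a : ℝ} (ha : a ≠ 0) (ha' : 1 - 2 * a ≠ 0) :
    HasDerivAt logF (log (4 * a) - log (1 - 2 * a)) a := by
  have h := ((((hasDerivAt_id a).const_mul 2).const_add (1 / 4)).mul_const (log 2)).add
    (hasDerivAt_mul_log ha) |>.add
    (((hasDerivAt_id a).const_sub (1 / 2)).mul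
      (((hasDerivAt_id a).const_mul 2).const_sub 1 |>.log ha'))
  refine h.congr_deriv ?_
  rw [log_mul four_ne_zero ha, show (4 : ℝ) = 2 ^ 2 by norm_num, log_pow]
  simp only [id]
  field_simp
  ring

lemma logF_strictAntiOn : StrictAntiOn logF (Icc 0 (1 / 6)) := by
  refine strictAntiOn_of_deriv_neg (convex_Icc _ _) continuous_logF.continuousOn fun a ha ↦ ?_
  rw [interior_Icc] at ha
  obtain ⟨ha₀, ha₁⟩ := ha
  rw [(hasDerivAt_logF ha₀.ne' (by linarith)).deriv, sub_neg]
  exact log_lt_log (by positivity) (by linarith)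

lemma f_strictAntiOn : StrictAntiOn f (Icc 0 (1 / 6)) :=
  (exp_strictMono.comp_strictAntiOn logF_strictAntiOn).congr
    (eqOn_f_exp_logF.mono (Icc_subset_Icc_right (by norm_num))).symm

lemma continuousOn_f : ContinuousOn f (Icc 0 (1 / 2)) :=
  (continuous_exp.comp continuous_logF).continuousOn.congr eqOn_f_exp_logF

lemma f_zero : f 0 = 2 ^ (1 / 4 : ℝ) := by
  simp [f]

lemma tendsto_f_nhdsGT_zero : Tendsto f (𝓝[>] 0) (𝓝 (2 ^ (1 / 4 : ℝ))) := by
  have h := continuousOn_f 0 (by norm_num)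
  rw [ContinuousWithinAt, f_zero] at h
  exact h.mono_left (nhdsWithin_le_of_mem (Icc_mem_nhdsGT (by norm_num)))

lemma logF_one_div_sixteen : logF (1 / 16) = log (7 ^ 7 / 2 ^ 19) / 16 := by
  have h16 : log (1 / 16) = -(4 * log 2) := by
    rw [one_div, log_inv, show (16 : ℝ) = 2 ^ 4 by norm_num, log_pow]
    norm_num
  have h78 : log (1 - 2 * (1 / 16)) = log 7 - 3 * log 2 := by
    rw [show (1 - 2 * (1 / 16) : ℝ) = 7 / 2 ^ 3 by norm_num, log_div (by norm_num) (by norm_num),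
      log_pow]
    norm_num
  rw [logF, h16, h78, log_div (by norm_num) (by norm_num), log_pow, log_pow]
  ring

lemma one_lt_f_one_div_sixteen : 1 < f (1 / 16) := by
  rw [eqOn_f_exp_logF ⟨by norm_num, by norm_num⟩, Function.comp_apply, one_lt_exp_iff,
    logF_one_div_sixteen]
  exact div_pos (log_pos (by norm_num)) (by norm_num)

end Hilfssatz5

open Real in
theorem f_properties :
    StrictAntiOn (fun a : ℝ => (2 : ℝ) ^ (1 / 4 + 2 * a) * a ^ a * (1 - 2 * a) ^ (1 / 2 - a))
        (Set.Ioc 0 (1 / 16)) ∧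
    ContinuousOn (fun a : ℝ => (2 : ℝ) ^ (1 / 4 + 2 * a) * a ^ a * (1 - 2 * a) ^ (1 / 2 - a))
        (Set.Ioc 0 (1 / 16)) ∧
    Filter.Tendsto (fun a : ℝ => (2 : ℝ) ^ (1 / 4 + 2 * a) * a ^ a * (1 - 2 * a) ^ (1 / 2 - a))
        (nhdsWithin 0 (Set.Ioi 0)) (nhds ((2 : ℝ) ^ (1 / 4 : ℝ))) ∧
    1 < (2 : ℝ) ^ (1 / 4 + 2 * (1 / 16 : ℝ)) * (1 / 16 : ℝ) ^ (1 / 16 : ℝ) *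
        (1 - 2 * (1 / 16 : ℝ)) ^ (1 / 2 - (1 / 16 : ℝ)) := by
  refine ⟨Hilfssatz5.f_strictAntiOn.mono ?_, Hilfssatz5.continuousOn_f.mono ?_,
    Hilfssatz5.tendsto_f_nhdsGT_zero, Hilfssatz5.one_lt_f_one_div_sixteen⟩ <;>
  exact Ioc_subset_Icc_self.trans (Icc_subset_Icc_right (by norm_num))
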